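/- (Theorem 1, naive semantics.) For every valuation v ⊆ 𝒫: v ⊨ Naive if and only if E(v) is a naive extension of the AF (A_v, R_v), i.e. a ⊆-maximal conflict-free subset of A_v. Moreover, for every AF (A,R), the set of naive extensions of (A,R) equals {E(v) : (v_(A,R), v) ∈ ‖makeExt^na‖}, where makeExt^na = vary(IN_U); Naive?. -/
import Mathlib


noncomputable section

namespace DLPA

/-- Propositional variables: awareness, acceptance, attack, auxiliary acceptance
copies, plus countably many further auxiliary variables. -/
inductive PVar (U : Type) : Type
  | aw : U → PVar U
  | inn : U → PVar U
  | att : U → U → PVar U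
  | inn' : U → PVar U
  | aux : Nat → PVar U

-- DL-PA formulas and programs, by mutual recursion.
mutual
  inductive Form (U : Type) : Type
    | var : PVar U → Form U
    | neg : Form U → Form U
    | conj : Form U → Form U → Form U
    | box : Prog U → Form U → Form U
  inductive Prog (U : Type) : Type
    | add : PVar U → Prog U           -- +p
    | rem : PVar U → Prog U           -- −p
    | test : Form U → Prog U          -- φ?
    | seq : Prog U → Prog U → Prog U
    | choice : Prog U → Prog U → Prog U
    | conv : Prog U → Prog U
end

variable {U : Type}

/-- A valuation is a set of propositional variables. -/
abbrev Val (U : Type) := Set (PVar U)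

-- Satisfaction of formulas and interpretation of programs, by mutual recursion.
mutual
  def Sat : Val U → Form U → Prop
    | v, Form.var p => p ∈ v
    | v, Form.neg φ => ¬ Sat v φ
    | v, Form.conj φ ψ => Sat v φ ∧ Sat v ψ
    | v, Form.box π φ => ∀ w, Rel π v w → Sat w φ
  def Rel : Prog U → Val U → Val U → Prop
    | Prog.add p, v, w => w = v ∪ {p}
    | Prog.rem p, v, w => w = v \ {p}
    | Prog.test φ, v, w => w = v ∧ Sat v φ
    | Prog.seq π₁ π₂, v, w => ∃ u, Rel π₁ v u ∧ Rel π₂ u w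
    | Prog.choice π₁ π₂, v, w => Rel π₁ v w ∨ Rel π₂ v w
    | Prog.conv π, v, w => Rel π w v
end

def Form.falsum : Form U := Form.conj (Form.var (PVar.aux 0)) (Form.neg (Form.var (PVar.aux 0)))
def Form.top : Form U := Form.neg Form.falsum
def Form.impl (φ ψ : Form U) : Form U := Form.neg (Form.conj φ (Form.neg ψ))
def Form.disj (φ ψ : Form U) : Form U := Form.neg (Form.conj (Form.neg φ) (Form.neg ψ))
def Form.equiv (φ ψ : Form U) : Form U := Form.conj (Form.impl φ ψ) (Form.impl ψ φ)
def Form.dia (π : Prog U) (φ : Form U) : Form U := Form.neg (Form.box π (Form.neg φ))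
def Prog.skip : Prog U := Prog.test Form.top

/-- Sequential composition of a list of programs (`skip` for the empty list). -/
def seqList {β : Type} (f : β → Prog U) : List β → Prog U
  | [] => Prog.skip
  | p :: ps => Prog.seq (f p) (seqList f ps)

/-- Nondeterministic composition of a list of programs (`skip` for the empty list). -/
def unionList {β : Type} (f : β → Prog U) : List β → Prog U
  | [] => Prog.skip
  | [p] => f p
  | p :: ps => Prog.choice (f p) (unionList f ps)

def mkTrueOne (L : List (PVar U)) : Prog U :=
  unionList (fun p => Prog.seq (Prog.test (Form.neg (Form.var p))) (Prog.add p)) L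
def mkFalseOne (L : List (PVar U)) : Prog U :=
  unionList (fun p => Prog.seq (Prog.test (Form.var p)) (Prog.rem p)) L
def mkTrueSome (L : List (PVar U)) : Prog U :=
  seqList (fun p => Prog.choice (Prog.add p) Prog.skip) L
def mkFalseSome (L : List (PVar U)) : Prog U :=
  seqList (fun p => Prog.choice (Prog.rem p) Prog.skip) L
def vary (L : List (PVar U)) : Prog U :=
  seqList (fun p => Prog.choice (Prog.add p) (Prog.rem p)) L
/-- dis(ATT_R): for each pair (x,y) in the list, make true att_{x,y} or att_{y,x}. -/
def dis (L : List (U × U)) : Prog U :=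
  seqList (fun q => Prog.choice (Prog.add (PVar.att q.1 q.2)) (Prog.add (PVar.att q.2 q.1))) L

def conjList : List (Form U) → Form U
  | [] => Form.top
  | φ :: φs => Form.conj φ (conjList φs)
def disjList : List (Form U) → Form U
  | [] => Form.falsum
  | φ :: φs => Form.disj φ (disjList φs)

/-- The elements of a finite universe in a fixed order. -/
def enum (U : Type) [Fintype U] : List U := Finset.univ.toList

def bigConj [Fintype U] (f : U → Form U) : Form U := conjList ((enum U).map f)
def bigDisj [Fintype U] (f : U → Form U) : Form U := disjList ((enum U).map f)

def INlist (U : Type) [Fintype U] : List (PVar U) := (enum U).map PVar.inn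

/-- copy(IN_U) copies the value of in_x to in'_x, for every x ∈ U. -/
def copyIN (U : Type) [Fintype U] : Prog U :=
  seqList (fun x => Prog.choice
      (Prog.seq (Prog.test (Form.var (PVar.inn x))) (Prog.add (PVar.inn' x)))
      (Prog.seq (Prog.test (Form.neg (Form.var (PVar.inn x)))) (Prog.rem (PVar.inn' x))))
    (enum U)

def Well (U : Type) [Fintype U] : Form U :=
  bigConj (fun x => Form.impl (Form.var (PVar.inn x)) (Form.var (PVar.aw x)))

def ConFree (U : Type) [Fintype U] : Form U :=
  Form.conj (Well U) (bigConj fun x => bigConj fun y =>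
    Form.neg (Form.conj (Form.var (PVar.inn x))
      (Form.conj (Form.var (PVar.inn y)) (Form.var (PVar.att x y)))))

def AdmissibleF (U : Type) [Fintype U] : Form U :=
  Form.conj (ConFree U) (bigConj fun x => Form.impl (Form.var (PVar.inn x))
    (bigConj fun y => Form.impl (Form.conj (Form.var (PVar.aw y)) (Form.var (PVar.att y x)))
      (bigDisj fun z => Form.conj (Form.var (PVar.inn z)) (Form.var (PVar.att z y)))))

def StableF (U : Type) [Fintype U] : Form U :=
  Form.conj (Well U) (bigConj fun x => Form.impl (Form.var (PVar.aw x))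
    (Form.equiv (Form.var (PVar.inn x))
      (Form.neg (bigDisj fun y => Form.conj (Form.var (PVar.inn y)) (Form.var (PVar.att y x))))))

def CompleteF (U : Type) [Fintype U] : Form U :=
  Form.conj (ConFree U) (bigConj fun x => Form.equiv (Form.var (PVar.inn x))
    (bigConj fun y => Form.impl (Form.conj (Form.var (PVar.aw y)) (Form.var (PVar.att y x)))
      (bigDisj fun z => Form.conj (Form.var (PVar.inn z)) (Form.var (PVar.att z y)))))

def GroundedF (U : Type) [Fintype U] : Form U :=
  Form.conj (CompleteF U)
    (Form.box (Prog.seq (mkFalseOne (INlist U)) (mkFalseSome (INlist U))) (Form.neg (CompleteF U)))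

def PreferredF (U : Type) [Fintype U] : Form U :=
  Form.conj (AdmissibleF U)
    (Form.box (Prog.seq (mkTrueOne (INlist U)) (mkTrueSome (INlist U))) (Form.neg (AdmissibleF U)))

def NaiveF (U : Type) [Fintype U] : Form U :=
  Form.conj (ConFree U) (Form.box (mkTrueOne (INlist U)) (Form.neg (ConFree U)))

def IncludedInCp (U : Type) [Fintype U] : Form U :=
  bigConj fun x => Form.impl
    (Form.disj (Form.var (PVar.inn x)) (Form.conj (Form.var (PVar.aw x))
      (bigDisj fun y => Form.conj (Form.var (PVar.inn y)) (Form.var (PVar.att y x)))))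
    (Form.disj (Form.var (PVar.inn' x)) (Form.conj (Form.var (PVar.aw x))
      (bigDisj fun y => Form.conj (Form.var (PVar.inn' y)) (Form.var (PVar.att y x)))))

def IncludesCp (U : Type) [Fintype U] : Form U :=
  bigConj fun x => Form.impl
    (Form.disj (Form.var (PVar.inn' x)) (Form.conj (Form.var (PVar.aw x))
      (bigDisj fun y => Form.conj (Form.var (PVar.inn' y)) (Form.var (PVar.att y x)))))
    (Form.disj (Form.var (PVar.inn x)) (Form.conj (Form.var (PVar.aw x))
      (bigDisj fun y => Form.conj (Form.var (PVar.inn y)) (Form.var (PVar.att y x)))))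

/-- makeExt^σ = vary(IN_U); φ_σ? -/
def makeExt (U : Type) [Fintype U] (φ : Form U) : Prog U :=
  Prog.seq (vary (INlist U)) (Prog.test φ)

def SemiStableF (U : Type) [Fintype U] : Form U :=
  Form.conj (CompleteF U)
    (Form.box (Prog.seq (copyIN U) (makeExt U (CompleteF U)))
      (Form.impl (IncludesCp U) (IncludedInCp U)))

/-- A_v -/
def Av (v : Val U) : Set U := {x | PVar.aw x ∈ v}
/-- R_v -/
def Rv (v : Val U) : Set (U × U) := {q | q.1 ∈ Av v ∧ q.2 ∈ Av v ∧ PVar.att q.1 q.2 ∈ v}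
/-- E(v) -/
def Ev (v : Val U) : Set U := {x | PVar.inn x ∈ v}
/-- {x ∈ U : in'_x ∈ v} -/
def Cv (v : Val U) : Set U := {x | PVar.inn' x ∈ v}
/-- v_(A,R) = AW_A ∪ ATT_R -/
def valOf (A : Set U) (R : Set (U × U)) : Val U :=
  (PVar.aw '' A) ∪ ((fun q : U × U => PVar.att q.1 q.2) '' R)

/-- E⁺, the set of arguments of A attacked by E in (A,R). -/
def attacked (A : Set U) (R : Set (U × U)) (E : Set U) : Set U :=
  {x ∈ A | ∃ y ∈ E, (y, x) ∈ R}
/-- E⊕ = E ∪ E⁺, the range of E. -/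
def rangeOf (A : Set U) (R : Set (U × U)) (E : Set U) : Set U :=
  E ∪ attacked A R E

def IsConflictFree (A : Set U) (R : Set (U × U)) (E : Set U) : Prop :=
  E ⊆ A ∧ E ∩ attacked A R E = ∅
def Defends (A : Set U) (R : Set (U × U)) (E : Set U) (a : U) : Prop :=
  ∀ x ∈ A, (x, a) ∈ R → x ∈ attacked A R E
def IsAdmissibleExt (A : Set U) (R : Set (U × U)) (E : Set U) : Prop :=
  IsConflictFree A R E ∧ ∀ a ∈ E, Defends A R E a
def IsStableExt (A : Set U) (R : Set (U × U)) (E : Set U) : Prop :=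
  IsConflictFree A R E ∧ A \ E ⊆ attacked A R E
def IsCompleteExt (A : Set U) (R : Set (U × U)) (E : Set U) : Prop :=
  IsConflictFree A R E ∧ E = {a ∈ A | Defends A R E a}
def IsGroundedExt (A : Set U) (R : Set (U × U)) (E : Set U) : Prop :=
  IsCompleteExt A R E ∧ ∀ E', IsCompleteExt A R E' → E' ⊆ E → E' = E
def IsPreferredExt (A : Set U) (R : Set (U × U)) (E : Set U) : Prop :=
  IsCompleteExt A R E ∧ ∀ E', IsCompleteExt A R E' → E ⊆ E' → E' = E
def IsNaiveExt (A : Set U) (R : Set (U × U)) (E : Set U) : Prop :=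
  IsConflictFree A R E ∧ ∀ E', IsConflictFree A R E' → E ⊆ E' → E' = E
def IsSemiStableExt (A : Set U) (R : Set (U × U)) (E : Set U) : Prop :=
  IsCompleteExt A R E ∧ ¬ ∃ E', IsCompleteExt A R E' ∧ rangeOf A R E ⊂ rangeOf A R E'

variable {U : Type}

lemma sat_conjList (v : Val U) (L : List (Form U)) :
    Sat v (conjList L) ↔ ∀ φ ∈ L, Sat v φ := by
  induction L with
  | nil => simp [conjList, Form.top, Form.falsum, Sat]
  | cons φ φs ih => simp [conjList, Sat, ih]

lemma sat_bigConj [Fintype U] (v : Val U) (f : U → Form U) :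
    Sat v (bigConj f) ↔ ∀ x, Sat v (f x) := by
  simp [bigConj, sat_conjList, enum, Finset.mem_toList]

lemma enum_ne_nil [Fintype U] [Nonempty U] : enum U ≠ [] := by
  have : (Finset.univ : Finset U).Nonempty := Finset.univ_nonempty
  simpa [enum, Finset.toList_eq_nil, Finset.univ_eq_empty_iff] using not_isEmpty_of_nonempty U

lemma sat_ConFree_iff [Fintype U] (v : Val U) :
    Sat v (ConFree U) ↔ IsConflictFree (Av v) (Rv v) (Ev v) := by
  simp only [ConFree, Well, Sat, sat_bigConj, Form.impl]
  constructor
  · rintro ⟨hw, hc⟩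
    refine ⟨fun x hx => by have := hw x; simp [Sat] at this; exact this hx, ?_⟩
    ext x
    simp only [Set.mem_inter_iff, attacked, Set.mem_setOf_eq, Set.mem_empty_iff_false, iff_false]
    rintro ⟨hx, -, y, hy, hr⟩
    have := hc y x
    simp [Sat] at this
    exact this hy hx hr.2.2
  · rintro ⟨hsub, hcf⟩
    constructor
    · intro x; simp [Sat]; exact fun hx => hsub hx
    · intro x y
      simp [Sat]
      intro hx hy hatt
      have : y ∈ Ev v ∩ attacked (Av v) (Rv v) (Ev v) := by
        refine ⟨hy, hsub hy, x, hx, ?_⟩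
        exact ⟨hsub hx, hsub hy, hatt⟩
      rw [hcf] at this; exact this
lemma mem_INlist [Fintype U] (p : PVar U) : p ∈ INlist U ↔ ∃ x, p = PVar.inn x := by
  simp [INlist, enum, Finset.mem_toList, eq_comm]

lemma rel_unionList {β : Type} (f : β → Prog U) (L : List β) (hL : L ≠ []) (v w : Val U) :
    Rel (unionList f L) v w ↔ ∃ p ∈ L, Rel (f p) v w := by
  induction L with
  | nil => simp at hL
  | cons p ps ih =>
    cases ps with
    | nil => simp [unionList]
    | cons q qs =>
      simp only [unionList, Rel]
      rw [ih (by simp)]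
      simp

lemma rel_mkTrueOne' (L : List (PVar U)) (hL : L ≠ []) (v w : Val U) :
    Rel (mkTrueOne L) v w ↔ ∃ p ∈ L, p ∉ v ∧ w = v ∪ {p} := by
  rw [mkTrueOne, rel_unionList _ _ hL]
  apply exists_congr; intro p
  simp only [Rel, Sat]
  constructor
  · rintro ⟨hp, u, ⟨rfl, h⟩, rfl⟩; exact ⟨hp, h, rfl⟩
  · rintro ⟨hp, h, rfl⟩; exact ⟨hp, v, ⟨rfl, h⟩, rfl⟩

lemma rel_vary (L : List (PVar U)) (v w : Val U) :
    Rel (vary L) v w ↔ ∀ p, p ∉ L → (p ∈ w ↔ p ∈ v) := by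
  induction L generalizing v with
  | nil =>
    simp [vary, seqList, Prog.skip, Rel, Sat, Form.top, Form.falsum]
    constructor
    · rintro rfl; intros; rfl
    · intro h; ext p; exact h p
  | cons p ps ih =>
    simp only [vary, seqList, Rel] at *
    constructor
    · rintro ⟨u, h1, h2⟩ q hq
      have hqp : q ≠ p := fun h => hq (by simp [h])
      have hqps : q ∉ ps := fun h => hq (by simp [h])
      rw [(ih u).mp h2 q hqps]
      rcases h1 with rfl | rfl <;> simp [hqp]
    · intro h
      by_cases hw : p ∈ w
      · refine ⟨v ∪ {p}, Or.inl rfl, (ih _).mpr ?_⟩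
        intro q hq
        by_cases hqp : q = p
        · subst hqp; simp [hw]
        · have := h q (by simp [hqp, hq]); simp [hqp, this]
      · refine ⟨v \ {p}, Or.inr rfl, (ih _).mpr ?_⟩
        intro q hq
        by_cases hqp : q = p
        · subst hqp; simp [hw]
        · have := h q (by simp [hqp, hq]); simp [hqp, this]
lemma Av_union_inn (v : Val U) (x : U) : Av (v ∪ {PVar.inn x}) = Av v := by
  ext y; simp [Av]

lemma Rv_union_inn (v : Val U) (x : U) : Rv (v ∪ {PVar.inn x}) = Rv v := by
  ext q; simp [Rv, Av]

lemma Ev_union_inn (v : Val U) (x : U) : Ev (v ∪ {PVar.inn x}) = Ev v ∪ {x} := by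
  ext y; simp [Ev, PVar.inn.injEq]

lemma cf_mono {A : Set U} {R : Set (U × U)} {E E' : Set U}
    (h : IsConflictFree A R E') (hsub : E ⊆ E') : IsConflictFree A R E := by
  refine ⟨hsub.trans h.1, ?_⟩
  have : E ∩ attacked A R E ⊆ E' ∩ attacked A R E' := by
    rintro x ⟨hx, hxA, y, hy, hr⟩
    exact ⟨hsub hx, hxA, y, hsub hy, hr⟩
  rw [h.2] at this
  exact Set.eq_empty_of_subset_empty this

lemma sat_naive_iff [Fintype U] [Nonempty U] (v : Val U) :
    Sat v (NaiveF U) ↔ IsNaiveExt (Av v) (Rv v) (Ev v) := by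
  have hINne : INlist U ≠ [] := by
    simp [INlist]; exact enum_ne_nil
  have hbox : Sat v (Form.box (mkTrueOne (INlist U)) (Form.neg (ConFree U))) ↔
      ∀ x, PVar.inn x ∉ v → ¬ Sat (v ∪ {PVar.inn x}) (ConFree U) := by
    simp only [Sat]
    constructor
    · intro h x hx
      exact h _ ((rel_mkTrueOne' _ hINne _ _).mpr ⟨_, (mem_INlist _).mpr ⟨x, rfl⟩, hx, rfl⟩)
    · intro h w hw
      obtain ⟨p, hp, hpv, rfl⟩ := (rel_mkTrueOne' _ hINne _ _).mp hw
      obtain ⟨x, rfl⟩ := (mem_INlist p).mp hp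
      exact h x hpv
  obtain ⟨c, hc⟩ : ∃ c, c = ConFree U := ⟨_, rfl⟩
  have hN : NaiveF U = Form.conj c (Form.box (mkTrueOne (INlist U)) (Form.neg c)) := by
    rw [hc]; rfl
  rw [hN]
  simp only [Sat]
  rw [hc]
  rw [show (∀ w, Rel (mkTrueOne (INlist U)) v w → ¬ Sat w (ConFree U)) ↔
      Sat v (Form.box (mkTrueOne (INlist U)) (Form.neg (ConFree U))) by simp only [Sat]]
  rw [hbox, sat_ConFree_iff, IsNaiveExt]
  constructor
  · rintro ⟨hcf, hmax⟩
    refine ⟨hcf, fun E' hE' hsub => ?_⟩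
    by_contra hne
    obtain ⟨x, hxE', hxE⟩ : ∃ x, x ∈ E' ∧ x ∉ Ev v := by
      by_contra hc
      push_neg at hc
      exact hne (Set.Subset.antisymm hc hsub)
    have hx : PVar.inn x ∉ v := hxE
    apply hmax x hx
    rw [sat_ConFree_iff, Av_union_inn, Rv_union_inn, Ev_union_inn]
    exact cf_mono hE' (by intro y hy; rcases hy with hy | hy; exacts [hsub hy, by simp_all])
  · rintro ⟨hcf, hmax⟩
    refine ⟨hcf, fun x hx hsat => ?_⟩
    rw [sat_ConFree_iff, Av_union_inn, Rv_union_inn, Ev_union_inn] at hsat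
    have := hmax _ hsat (Set.subset_union_left)
    apply hx
    have : x ∈ Ev v := by rw [← this]; simp
    exact this
lemma Av_agree [Fintype U] {v w : Val U} (h : ∀ p, p ∉ INlist U → (p ∈ w ↔ p ∈ v)) :
    Av w = Av v := by
  ext x
  exact h _ (by simp [mem_INlist])

lemma Rv_agree [Fintype U] {v w : Val U} (h : ∀ p, p ∉ INlist U → (p ∈ w ↔ p ∈ v)) :
    Rv w = Rv v := by
  have := Av_agree h
  ext q
  simp only [Rv, Set.mem_setOf_eq, this]
  rw [h _ (by simp [mem_INlist])]

lemma Av_valOf (A : Set U) (R : Set (U × U)) : Av (valOf A R) = A := by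
  ext x; simp [Av, valOf]

lemma Rv_valOf (A : Set U) (R : Set (U × U)) (hR : R ⊆ A ×ˢ A) :
    Rv (valOf A R) = R := by
  ext ⟨x, y⟩
  have hatt : PVar.att x y ∈ valOf A R ↔ (x, y) ∈ R := by
    simp only [valOf, Set.mem_union, Set.mem_image]
    constructor
    · rintro (⟨a, ha, h⟩ | ⟨⟨a, b⟩, hab, h⟩)
      · simp at h
      · simp only [PVar.att.injEq] at h
        obtain ⟨rfl, rfl⟩ := h
        exact hab
    · intro hxy; exact Or.inr ⟨(x, y), hxy, rfl⟩
  simp only [Rv, Av_valOf, Set.mem_setOf_eq, hatt]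
  constructor
  · rintro ⟨-, -, h⟩; exact h
  · intro hxy
    have := hR hxy
    simp only [Set.mem_prod] at this
    exact ⟨this.1, this.2, hxy⟩


end DLPA

end

open DLPA in
/-- Theorem 1 for the naive semantics. -/
theorem thm1_naive
    (U : Type) [Fintype U] [Nonempty U] :
    (∀ v : Val U, Sat v (NaiveF U) ↔ IsNaiveExt (Av v) (Rv v) (Ev v)) ∧
    (∀ (A : Set U) (R : Set (U × U)), R ⊆ A ×ˢ A →
      {E | IsNaiveExt A R E} =
        {E | ∃ v : Val U, Rel (makeExt U (NaiveF U)) (valOf A R) v ∧ E = Ev v}) := by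
  refine ⟨sat_naive_iff, fun A R hR => ?_⟩
  have hrel : ∀ v : Val U, DLPA.Rel (makeExt U (NaiveF U)) (valOf A R) v ↔
      (∀ p, p ∉ INlist U → (p ∈ v ↔ p ∈ valOf A R)) ∧ Sat v (NaiveF U) := by
    intro v
    simp only [makeExt, DLPA.Rel]
    constructor
    · rintro ⟨u, h1, rfl, h2⟩
      exact ⟨(rel_vary _ _ _).mp h1, h2⟩
    · rintro ⟨h1, h2⟩
      exact ⟨v, (rel_vary _ _ _).mpr h1, rfl, h2⟩
  ext E
  simp only [Set.mem_setOf_eq]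
  constructor
  · intro hE
    refine ⟨valOf A R ∪ (PVar.inn '' E), ?_, ?_⟩
    · rw [hrel]
      have hagree : ∀ p, p ∉ INlist U → (p ∈ valOf A R ∪ PVar.inn '' E ↔ p ∈ valOf A R) := by
        intro p hp
        simp only [mem_INlist, not_exists] at hp
        simp only [Set.mem_union, Set.mem_image, or_iff_left_iff_imp]
        rintro ⟨x, hx, rfl⟩
        exact absurd rfl (hp x)
      refine ⟨hagree, ?_⟩
      rw [sat_naive_iff, Av_agree hagree, Rv_agree hagree, Av_valOf, Rv_valOf A R hR]
      have hEv : Ev (valOf A R ∪ PVar.inn '' E) = E := by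
        ext x
        simp [Ev, valOf, PVar.inn.injEq]
      rw [hEv]; exact hE
    · ext x
      simp [Ev, valOf, PVar.inn.injEq]
  · rintro ⟨v, hv, rfl⟩
    rw [hrel] at hv
    have := (sat_naive_iff v).mp hv.2
    rwa [Av_agree hv.1, Rv_agree hv.1, Av_valOf, Rv_valOf A R hR] at this
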